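/- Let n = n₁ + n₂ with n₁, n₂ ≥ 2, and let φ₁ ∈ Aut(F_{n₁}), φ₂ ∈ Aut(F_{n₂}). Then j(φ₁, φ₂) is an automorphism of F_n, and its twisted cocycle value decomposes block-diagonally: τ₁^{(n)}(j(φ₁, φ₂))(X_k) = (ι₁ ⊗ ι₁)(τ₁^{(n₁)}(φ₁)(X_k)) for 1 ≤ k ≤ n₁, and τ₁^{(n)}(j(φ₁, φ₂))(X_{n₁+k}) = (ι₂ ⊗ ι₂)(τ₁^{(n₂)}(φ₂)(X_k)) for 1 ≤ k ≤ n₂. (This is the cocycle-level form of the primitivity relation ι^* h_p = ϖ₁^* h_p + ϖ₂^* h_p.) -/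

import Mathlib

/-!
The truncated Magnus expansion is natural in the generators: for `f : Fin m → Fin n`,
`Θ ∘ FreeGroup.map f` is `Θ` followed by the map of `M` induced by `ι_f = Finsupp.mapDomain f`,
so `a` and `θ₂` intertwine `FreeGroup.map f` with `ι_f` and `ι_f ⊗ ι_f`. If an automorphism `ψ`
of `F_n` restricts along `FreeGroup.map f` to `φ`, then so does `ψ⁻¹` to `φ⁻¹`, and
`|ψ| ∘ ι_f = ι_f ∘ |φ|`; the defining formula of `τ₁` then gives
`τ₁(ψ) ∘ ι_f = (ι_f ⊗ ι_f) ∘ τ₁(φ)`. The juxtaposition `j(φ₁, φ₂)` restricts to `φ_i` along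
each embedding `ε_i`.
-/

noncomputable section
open scoped TensorProduct


/-- `H = Fin n →₀ ℤ`, the first integral homology of the free group. -/
abbrev Hz (n : ℕ) : Type := Fin n →₀ ℤ

/-- The standard basis vector `X i`. -/
def Xz (n : ℕ) (i : Fin n) : Hz n := Finsupp.single i 1

/-- `H ⊗ℤ H`. -/
abbrev HHz (n : ℕ) : Type := Hz n ⊗[ℤ] Hz n

/-- The degree ≤ 2 truncation of the Magnus algebra: underlying set `H × (H ⊗ H)`,
with multiplication `(u,s)·(u',s') = (u+u', s+s'+u⊗u')`. -/
def Mn (n : ℕ) : Type := Hz n × HHz n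

namespace Mn

variable {n : ℕ}

instance : Group (Mn n) where
  mul a b := (a.1 + b.1, a.2 + b.2 + a.1 ⊗ₜ[ℤ] b.1)
  one := ((0 : Hz n), (0 : HHz n))
  inv a := (-a.1, -a.2 + a.1 ⊗ₜ[ℤ] a.1)
  mul_assoc a b c := by
    show (_, _) = (_, _)
    refine Prod.ext (add_assoc _ _ _) ?_
    show a.2 + b.2 + a.1 ⊗ₜ[ℤ] b.1 + c.2 + (a.1 + b.1) ⊗ₜ[ℤ] c.1
        = a.2 + (b.2 + c.2 + b.1 ⊗ₜ[ℤ] c.1) + a.1 ⊗ₜ[ℤ] (b.1 + c.1)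
    rw [TensorProduct.add_tmul, TensorProduct.tmul_add]
    abel
  one_mul a := by
    show ((0 : Hz n) + a.1, (0 : HHz n) + a.2 + (0 : Hz n) ⊗ₜ[ℤ] a.1) = a
    rw [TensorProduct.zero_tmul]
    simp <;> rfl
  mul_one a := by
    show (a.1 + 0, a.2 + (0:HHz n) + a.1 ⊗ₜ[ℤ] (0 : Hz n)) = a
    rw [TensorProduct.tmul_zero]
    simp <;> rfl
  inv_mul_cancel a := by
    show (-a.1 + a.1, (-a.2 + a.1 ⊗ₜ[ℤ] a.1) + a.2 + (-a.1) ⊗ₜ[ℤ] a.1) = ((0:Hz n), (0:HHz n))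
    rw [TensorProduct.neg_tmul]
    refine Prod.ext (by simp) ?_
    show _ = (0 : HHz n)
    abel

end Mn

/-- The truncated standard Magnus expansion `Θ : F_n →* M_n`, `x_i ↦ (X_i, 0)`. -/
def Theta (n : ℕ) : FreeGroup (Fin n) →* Mn n :=
  FreeGroup.lift fun i => ((Xz n i, 0) : Mn n)

/-- The abelianization map `a : F_n → H`, the first component of `Θ`. -/
def aMap (n : ℕ) (γ : FreeGroup (Fin n)) : Hz n := (Theta n γ).1

/-- `θ₂`, the second component of the truncated Magnus expansion. -/
def theta2 (n : ℕ) (γ : FreeGroup (Fin n)) : HHz n := (Theta n γ).2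


/-- The embedding `F_{n₁} → F_{n₁+n₂}`, `x_k ↦ x_k`. -/
def embL (n₁ n₂ : ℕ) : FreeGroup (Fin n₁) →* FreeGroup (Fin (n₁ + n₂)) :=
  FreeGroup.map (Fin.castAdd n₂)

/-- The embedding `F_{n₂} → F_{n₁+n₂}`, `x_k ↦ x_{n₁+k}`. -/
def embR (n₁ n₂ : ℕ) : FreeGroup (Fin n₂) →* FreeGroup (Fin (n₁ + n₂)) :=
  FreeGroup.map (Fin.natAdd n₁)

/-- The juxtaposition endomorphism `j(φ₁, φ₂)` of `F_{n₁+n₂}`. -/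
def jmap (n₁ n₂ : ℕ) (φ₁ : MulAut (FreeGroup (Fin n₁)))
    (φ₂ : MulAut (FreeGroup (Fin n₂))) :
    FreeGroup (Fin (n₁ + n₂)) →* FreeGroup (Fin (n₁ + n₂)) :=
  FreeGroup.lift (Fin.addCases
    (fun k => embL n₁ n₂ (φ₁ (FreeGroup.of k)))
    (fun k => embR n₁ n₂ (φ₂ (FreeGroup.of k))))

/-- The additive embedding `H^{(n₁)} → H^{(n₁+n₂)}`, `X_k ↦ X_k`. -/
def iotaL (n₁ n₂ : ℕ) : Hz n₁ →ₗ[ℤ] Hz (n₁ + n₂) :=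
  Finsupp.lmapDomain ℤ ℤ (Fin.castAdd n₂)

/-- The additive embedding `H^{(n₂)} → H^{(n₁+n₂)}`, `X_k ↦ X_{n₁+k}`. -/
def iotaR (n₁ n₂ : ℕ) : Hz n₂ →ₗ[ℤ] Hz (n₁ + n₂) :=
  Finsupp.lmapDomain ℤ ℤ (Fin.natAdd n₁)

namespace Mn

variable {m n : ℕ}

def map (ι : Hz m →ₗ[ℤ] Hz n) : Mn m →* Mn n where
  toFun a := (ι a.1, TensorProduct.map ι ι a.2)
  map_one' := by
    show (ι 0, TensorProduct.map ι ι 0) = ((0 : Hz n), (0 : HHz n))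
    simp
  map_mul' a b := by
    show (ι (a.1 + b.1), TensorProduct.map ι ι (a.2 + b.2 + a.1 ⊗ₜ[ℤ] b.1))
      = (ι a.1 + ι b.1, TensorProduct.map ι ι a.2 + TensorProduct.map ι ι b.2
          + ι a.1 ⊗ₜ[ℤ] ι b.1)
    simp [TensorProduct.map_tmul]

end Mn

section Magnus

variable {m n : ℕ}

lemma Theta_of (i : Fin n) : Theta n (FreeGroup.of i) = ((Xz n i, 0) : Mn n) :=
  FreeGroup.lift_apply_of

lemma aMap_of (i : Fin n) : aMap n (FreeGroup.of i) = Xz n i := by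
  simp [aMap, Theta_of]

lemma theta2_of (i : Fin n) : theta2 n (FreeGroup.of i) = 0 := by
  simp [theta2, Theta_of]

lemma lmapDomain_Xz (f : Fin m → Fin n) (i : Fin m) :
    Finsupp.lmapDomain ℤ ℤ f (Xz m i) = Xz n (f i) := by
  simp [Xz, Finsupp.mapDomain_single]

lemma Theta_map (f : Fin m → Fin n) (γ : FreeGroup (Fin m)) :
    Theta n (FreeGroup.map f γ) = Mn.map (Finsupp.lmapDomain ℤ ℤ f) (Theta m γ) := by
  suffices (Theta n).comp (FreeGroup.map f)
      = (Mn.map (Finsupp.lmapDomain ℤ ℤ f)).comp (Theta m) from DFunLike.congr_fun this γ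
  refine FreeGroup.ext_hom _ _ fun i => ?_
  simp only [MonoidHom.comp_apply, FreeGroup.map.of, Theta_of]
  show ((Xz n (f i), 0) : Mn n)
    = (Finsupp.lmapDomain ℤ ℤ f (Xz m i), TensorProduct.map _ _ 0)
  rw [lmapDomain_Xz, map_zero]

lemma aMap_map (f : Fin m → Fin n) (γ : FreeGroup (Fin m)) :
    aMap n (FreeGroup.map f γ) = Finsupp.lmapDomain ℤ ℤ f (aMap m γ) :=
  congrArg Prod.fst (Theta_map f γ)

lemma theta2_map (f : Fin m → Fin n) (γ : FreeGroup (Fin m)) :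
    theta2 n (FreeGroup.map f γ)
      = TensorProduct.map (Finsupp.lmapDomain ℤ ℤ f) (Finsupp.lmapDomain ℤ ℤ f)
          (theta2 m γ) :=
  congrArg Prod.snd (Theta_map f γ)

lemma LinearMap.ext_aMap {M : Type*} [AddCommGroup M] {A B : Hz n →ₗ[ℤ] M}
    (h : ∀ γ : FreeGroup (Fin n), A (aMap n γ) = B (aMap n γ)) : A = B :=
  Finsupp.basisSingleOne.ext fun i => by simpa [aMap_of, Xz] using h (FreeGroup.of i)

end Magnus

section Naturality

variable {m n : ℕ} (f : Fin m → Fin n) {ψ : MulAut (FreeGroup (Fin n))}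
  {φ : MulAut (FreeGroup (Fin m))}

lemma inv_apply_map_of_apply_map (hψφ : ∀ γ, ψ (FreeGroup.map f γ) = FreeGroup.map f (φ γ))
    (γ : FreeGroup (Fin m)) : ψ⁻¹ (FreeGroup.map f γ) = FreeGroup.map f (φ⁻¹ γ) := by
  rw [MulAut.inv_apply, MulEquiv.symm_apply_eq, hψφ, MulAut.apply_inv_self]

lemma induced_comp_lmapDomain {A : Hz n →+ Hz n} {B : Hz m →+ Hz m}
    (hψφ : ∀ γ, ψ (FreeGroup.map f γ) = FreeGroup.map f (φ γ))
    (hA : ∀ γ, A (aMap n γ) = aMap n (ψ γ)) (hB : ∀ γ, B (aMap m γ) = aMap m (φ γ)) :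
    A.toIntLinearMap ∘ₗ Finsupp.lmapDomain ℤ ℤ f
      = Finsupp.lmapDomain ℤ ℤ f ∘ₗ B.toIntLinearMap :=
  LinearMap.ext_aMap fun γ => by
    simp only [LinearMap.comp_apply, AddMonoidHom.coe_toIntLinearMap, ← aMap_map, hA, hB,
      hψφ]

lemma tau_lmapDomain_aMap {A : Hz n →+ Hz n} {B : Hz m →+ Hz m} {T : Hz n →+ HHz n}
    {T' : Hz m →+ HHz m}
    (hψφ : ∀ γ, ψ (FreeGroup.map f γ) = FreeGroup.map f (φ γ))
    (hA : ∀ γ, A (aMap n γ) = aMap n (ψ γ)) (hB : ∀ γ, B (aMap m γ) = aMap m (φ γ))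
    (hT : ∀ γ, T (aMap n γ)
      = theta2 n γ - TensorProduct.map A.toIntLinearMap A.toIntLinearMap (theta2 n (ψ⁻¹ γ)))
    (hT' : ∀ γ, T' (aMap m γ)
      = theta2 m γ - TensorProduct.map B.toIntLinearMap B.toIntLinearMap (theta2 m (φ⁻¹ γ)))
    (γ : FreeGroup (Fin m)) :
    T (Finsupp.lmapDomain ℤ ℤ f (aMap m γ))
      = TensorProduct.map (Finsupp.lmapDomain ℤ ℤ f) (Finsupp.lmapDomain ℤ ℤ f)
          (T' (aMap m γ)) := by
  rw [← aMap_map, hT, hT', inv_apply_map_of_apply_map f hψφ, theta2_map, theta2_map, map_sub,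
    ← LinearMap.comp_apply (TensorProduct.map _ _), ← TensorProduct.map_comp,
    induced_comp_lmapDomain f hψφ hA hB, TensorProduct.map_comp, LinearMap.comp_apply]

end Naturality

section Juxtaposition

variable (n₁ n₂ : ℕ) (φ₁ : MulAut (FreeGroup (Fin n₁))) (φ₂ : MulAut (FreeGroup (Fin n₂)))

lemma jmap_comp_embL :
    (jmap n₁ n₂ φ₁ φ₂).comp (embL n₁ n₂) = (embL n₁ n₂).comp φ₁.toMonoidHom :=
  FreeGroup.ext_hom _ _ fun k => by simp [jmap, embL]

lemma jmap_comp_embR :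
    (jmap n₁ n₂ φ₁ φ₂).comp (embR n₁ n₂) = (embR n₁ n₂).comp φ₂.toMonoidHom :=
  FreeGroup.ext_hom _ _ fun k => by simp [jmap, embR]

lemma jmap_embL (γ : FreeGroup (Fin n₁)) :
    jmap n₁ n₂ φ₁ φ₂ (embL n₁ n₂ γ) = embL n₁ n₂ (φ₁ γ) :=
  DFunLike.congr_fun (jmap_comp_embL n₁ n₂ φ₁ φ₂) γ

lemma jmap_embR (γ : FreeGroup (Fin n₂)) :
    jmap n₁ n₂ φ₁ φ₂ (embR n₁ n₂ γ) = embR n₁ n₂ (φ₂ γ) :=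
  DFunLike.congr_fun (jmap_comp_embR n₁ n₂ φ₁ φ₂) γ

lemma jmap_comp_jmap (ψ₁ : MulAut (FreeGroup (Fin n₁))) (ψ₂ : MulAut (FreeGroup (Fin n₂))) :
    (jmap n₁ n₂ φ₁ φ₂).comp (jmap n₁ n₂ ψ₁ ψ₂) = jmap n₁ n₂ (φ₁ * ψ₁) (φ₂ * ψ₂) :=
  FreeGroup.ext_hom _ _ fun a => by
    induction a using Fin.addCases with
    | left k => simpa [jmap] using jmap_embL n₁ n₂ φ₁ φ₂ (ψ₁ (FreeGroup.of k))
    | right k => simpa [jmap] using jmap_embR n₁ n₂ φ₁ φ₂ (ψ₂ (FreeGroup.of k))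

lemma jmap_one_one : jmap n₁ n₂ 1 1 = MonoidHom.id _ :=
  FreeGroup.ext_hom _ _ fun a => by
    induction a using Fin.addCases with
    | left k => simp [jmap, embL]
    | right k => simp [jmap, embR]

def jmapEquiv : FreeGroup (Fin (n₁ + n₂)) ≃* FreeGroup (Fin (n₁ + n₂)) :=
  (jmap n₁ n₂ φ₁ φ₂).toMulEquiv (jmap n₁ n₂ φ₁⁻¹ φ₂⁻¹)
    (by rw [jmap_comp_jmap, inv_mul_cancel, inv_mul_cancel, jmap_one_one])
    (by rw [jmap_comp_jmap, mul_inv_cancel, mul_inv_cancel, jmap_one_one])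

end Juxtaposition

theorem stmt6_general (n₁ n₂ : ℕ)
    (Φ₁ : MulAut (FreeGroup (Fin n₁)) → (Hz n₁ →+ Hz n₁))
    (hΦ₁ : ∀ (φ : MulAut (FreeGroup (Fin n₁))) (γ : FreeGroup (Fin n₁)),
      Φ₁ φ (aMap n₁ γ) = aMap n₁ (φ γ))
    (τ₁ : MulAut (FreeGroup (Fin n₁)) → (Hz n₁ →+ HHz n₁))
    (hτ₁ : ∀ (φ : MulAut (FreeGroup (Fin n₁))) (γ : FreeGroup (Fin n₁)),
      τ₁ φ (aMap n₁ γ) = theta2 n₁ γ -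
        (TensorProduct.map (Φ₁ φ).toIntLinearMap (Φ₁ φ).toIntLinearMap)
          (theta2 n₁ (φ⁻¹ γ)))
    (Φ₂ : MulAut (FreeGroup (Fin n₂)) → (Hz n₂ →+ Hz n₂))
    (hΦ₂ : ∀ (φ : MulAut (FreeGroup (Fin n₂))) (γ : FreeGroup (Fin n₂)),
      Φ₂ φ (aMap n₂ γ) = aMap n₂ (φ γ))
    (τ₂ : MulAut (FreeGroup (Fin n₂)) → (Hz n₂ →+ HHz n₂))
    (hτ₂ : ∀ (φ : MulAut (FreeGroup (Fin n₂))) (γ : FreeGroup (Fin n₂)),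
      τ₂ φ (aMap n₂ γ) = theta2 n₂ γ -
        (TensorProduct.map (Φ₂ φ).toIntLinearMap (Φ₂ φ).toIntLinearMap)
          (theta2 n₂ (φ⁻¹ γ)))
    (Φ : MulAut (FreeGroup (Fin (n₁ + n₂))) → (Hz (n₁ + n₂) →+ Hz (n₁ + n₂)))
    (hΦ : ∀ (φ : MulAut (FreeGroup (Fin (n₁ + n₂)))) (γ : FreeGroup (Fin (n₁ + n₂))),
      Φ φ (aMap (n₁ + n₂) γ) = aMap (n₁ + n₂) (φ γ))
    (τ : MulAut (FreeGroup (Fin (n₁ + n₂))) → (Hz (n₁ + n₂) →+ HHz (n₁ + n₂)))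
    (hτ : ∀ (φ : MulAut (FreeGroup (Fin (n₁ + n₂)))) (γ : FreeGroup (Fin (n₁ + n₂))),
      τ φ (aMap (n₁ + n₂) γ) = theta2 (n₁ + n₂) γ -
        (TensorProduct.map (Φ φ).toIntLinearMap (Φ φ).toIntLinearMap)
          (theta2 (n₁ + n₂) (φ⁻¹ γ)))
    (φ₁ : MulAut (FreeGroup (Fin n₁))) (φ₂ : MulAut (FreeGroup (Fin n₂))) :
    Function.Bijective (jmap n₁ n₂ φ₁ φ₂) ∧
    ∀ ψ : MulAut (FreeGroup (Fin (n₁ + n₂))),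
      (∀ γ : FreeGroup (Fin (n₁ + n₂)), ψ γ = jmap n₁ n₂ φ₁ φ₂ γ) →
      (∀ k : Fin n₁,
        τ ψ (Xz (n₁ + n₂) (Fin.castAdd n₂ k)) =
          (TensorProduct.map (iotaL n₁ n₂) (iotaL n₁ n₂)) (τ₁ φ₁ (Xz n₁ k))) ∧
      (∀ k : Fin n₂,
        τ ψ (Xz (n₁ + n₂) (Fin.natAdd n₁ k)) =
          (TensorProduct.map (iotaR n₁ n₂) (iotaR n₁ n₂)) (τ₂ φ₂ (Xz n₂ k))) := by
  refine ⟨(jmapEquiv n₁ n₂ φ₁ φ₂).bijective, fun ψ hψ => ⟨fun k => ?_, fun k => ?_⟩⟩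
  · have := tau_lmapDomain_aMap (Fin.castAdd n₂)
      (fun γ => (hψ _).trans (jmap_embL n₁ n₂ φ₁ φ₂ γ)) (hΦ ψ) (hΦ₁ φ₁) (hτ ψ) (hτ₁ φ₁)
      (FreeGroup.of k)
    rwa [aMap_of, lmapDomain_Xz] at this
  · have := tau_lmapDomain_aMap (Fin.natAdd n₁)
      (fun γ => (hψ _).trans (jmap_embR n₁ n₂ φ₁ φ₂ γ)) (hΦ ψ) (hΦ₂ φ₂) (hτ ψ) (hτ₂ φ₂)
      (FreeGroup.of k)
    rwa [aMap_of, lmapDomain_Xz] at this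

theorem stmt6 (n₁ n₂ : ℕ) (hn₁ : 2 ≤ n₁) (hn₂ : 2 ≤ n₂)
    (Φ₁ : MulAut (FreeGroup (Fin n₁)) → (Hz n₁ →+ Hz n₁))
    (hΦ₁ : ∀ (φ : MulAut (FreeGroup (Fin n₁))) (γ : FreeGroup (Fin n₁)),
      Φ₁ φ (aMap n₁ γ) = aMap n₁ (φ γ))
    (τ₁ : MulAut (FreeGroup (Fin n₁)) → (Hz n₁ →+ HHz n₁))
    (hτ₁ : ∀ (φ : MulAut (FreeGroup (Fin n₁))) (γ : FreeGroup (Fin n₁)),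
      τ₁ φ (aMap n₁ γ) = theta2 n₁ γ -
        (TensorProduct.map (Φ₁ φ).toIntLinearMap (Φ₁ φ).toIntLinearMap)
          (theta2 n₁ (φ⁻¹ γ)))
    (Φ₂ : MulAut (FreeGroup (Fin n₂)) → (Hz n₂ →+ Hz n₂))
    (hΦ₂ : ∀ (φ : MulAut (FreeGroup (Fin n₂))) (γ : FreeGroup (Fin n₂)),
      Φ₂ φ (aMap n₂ γ) = aMap n₂ (φ γ))
    (τ₂ : MulAut (FreeGroup (Fin n₂)) → (Hz n₂ →+ HHz n₂))
    (hτ₂ : ∀ (φ : MulAut (FreeGroup (Fin n₂))) (γ : FreeGroup (Fin n₂)),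
      τ₂ φ (aMap n₂ γ) = theta2 n₂ γ -
        (TensorProduct.map (Φ₂ φ).toIntLinearMap (Φ₂ φ).toIntLinearMap)
          (theta2 n₂ (φ⁻¹ γ)))
    (Φ : MulAut (FreeGroup (Fin (n₁ + n₂))) → (Hz (n₁ + n₂) →+ Hz (n₁ + n₂)))
    (hΦ : ∀ (φ : MulAut (FreeGroup (Fin (n₁ + n₂)))) (γ : FreeGroup (Fin (n₁ + n₂))),
      Φ φ (aMap (n₁ + n₂) γ) = aMap (n₁ + n₂) (φ γ))
    (τ : MulAut (FreeGroup (Fin (n₁ + n₂))) → (Hz (n₁ + n₂) →+ HHz (n₁ + n₂)))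
    (hτ : ∀ (φ : MulAut (FreeGroup (Fin (n₁ + n₂)))) (γ : FreeGroup (Fin (n₁ + n₂))),
      τ φ (aMap (n₁ + n₂) γ) = theta2 (n₁ + n₂) γ -
        (TensorProduct.map (Φ φ).toIntLinearMap (Φ φ).toIntLinearMap)
          (theta2 (n₁ + n₂) (φ⁻¹ γ)))
    (φ₁ : MulAut (FreeGroup (Fin n₁))) (φ₂ : MulAut (FreeGroup (Fin n₂))) :
    Function.Bijective (jmap n₁ n₂ φ₁ φ₂) ∧
    ∀ ψ : MulAut (FreeGroup (Fin (n₁ + n₂))),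
      (∀ γ : FreeGroup (Fin (n₁ + n₂)), ψ γ = jmap n₁ n₂ φ₁ φ₂ γ) →
      (∀ k : Fin n₁,
        τ ψ (Xz (n₁ + n₂) (Fin.castAdd n₂ k)) =
          (TensorProduct.map (iotaL n₁ n₂) (iotaL n₁ n₂)) (τ₁ φ₁ (Xz n₁ k))) ∧
      (∀ k : Fin n₂,
        τ ψ (Xz (n₁ + n₂) (Fin.natAdd n₁ k)) =
          (TensorProduct.map (iotaR n₁ n₂) (iotaR n₁ n₂)) (τ₂ φ₂ (Xz n₂ k))) :=
  stmt6_general n₁ n₂ Φ₁ hΦ₁ τ₁ hτ₁ Φ₂ hΦ₂ τ₂ hτ₂ Φ hΦ τ hτ φ₁ φ₂
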